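/- arXiv:2412.02422 — 3 statements merged into one kernel-verified Lean document; each statement's English description precedes it below -/
import Mathlib

section
/- Let n > q > 0 be coprime and let n/q = [[b_1, ..., b_r]] and n/(n−q) = [[b'_1, ..., b'_s]] be the Hirzebruch–Jung continued fraction expansions (with all partial quotients ≥ 2). Then s = (Σ_{i=1}^r b_i) − 2r + 1. -/
/-!
Write `[[b]]` for the value of an expansion `b`. The duality `n/q ↔ n/(n-q)` is the symmetric
relation `([[b]] - 1) * ([[b']] - 1) = 1`. When all partial quotients are `≥ 2`, `[[a, t]]` lies in
`(a - 1, a]`, so the head of an expansion is the ceiling of its value, and this pins down the dual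
recursively: `[[2]]` is self-dual, the dual of `[[a + 1, t]]` is `[[2, t']]` where `[[t']]` is dual
to `[[a, t]]`, and the dual of `[[2, c, t]]` is `[[a' + 1, t']]` where `[[a', t']]` is dual to
`[[c, t]]`. Each step changes `s` and `Σ bᵢ - 2r + 1` by the same amount.
-/

/-- Value of the Hirzebruch–Jung continued fraction `[[b_1, …, b_r]]
= b_1 − 1/(b_2 − 1/(… − 1/b_r))`, given as a list of partial quotients.
(Note that `hj [b] = b` since `0⁻¹ = 0` in `ℚ`.) -/
def hj : List ℚ → ℚ
  | [] => 0
  | b :: l => b - (hj l)⁻¹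

def hjInt (b : List ℤ) : ℚ := hj (b.map (↑))

@[simp] lemma hjInt_nil : hjInt [] = 0 := rfl

@[simp] lemma hjInt_cons (a : ℤ) (b : List ℤ) : hjInt (a :: b) = a - (hjInt b)⁻¹ := rfl

lemma one_lt_hjInt_cons {a : ℤ} {t : List ℤ} (h : ∀ x ∈ a :: t, 2 ≤ x) : 1 < hjInt (a :: t) := by
  induction t generalizing a with
  | nil =>
    have ha : (2 : ℚ) ≤ a := by exact_mod_cast h a (by simp)
    rw [hjInt_cons, hjInt_nil, inv_zero, sub_zero]; linarith
  | cons c t ih =>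
    rw [List.forall_mem_cons] at h
    have : (hjInt (c :: t))⁻¹ < 1 := inv_lt_one_of_one_lt₀ (ih h.2)
    have ha : (2 : ℚ) ≤ a := by exact_mod_cast h.1
    rw [hjInt_cons]; linarith

lemma inv_hjInt_eq_zero_iff {t : List ℤ} (ht : ∀ x ∈ t, 2 ≤ x) : (hjInt t)⁻¹ = 0 ↔ t = [] := by
  cases t with
  | nil => simp
  | cons a t => simpa using (zero_lt_one.trans (one_lt_hjInt_cons ht)).ne'

lemma ceil_hjInt_cons (a : ℤ) {t : List ℤ} (ht : ∀ x ∈ t, 2 ≤ x) : ⌈hjInt (a :: t)⌉ = a := by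
  rw [Int.ceil_eq_iff, hjInt_cons]
  cases t with
  | nil => simp
  | cons c t =>
    have h := one_lt_hjInt_cons ht
    have : (0 : ℚ) < (hjInt (c :: t))⁻¹ := by positivity
    have : (hjInt (c :: t))⁻¹ < 1 := inv_lt_one_of_one_lt₀ h
    constructor <;> linarith

lemma hjInt_dual_two {b' : List ℤ} (hb' : ∀ x ∈ b', 2 ≤ x)
    (h : (hjInt [2] - 1) * (hjInt b' - 1) = 1) : b' = [2] := by
  have hx' : hjInt b' = 2 := by
    simp only [hjInt_cons, hjInt_nil, inv_zero, sub_zero, Int.cast_ofNat] at h; linarith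
  cases b' with
  | nil => simp at hx'
  | cons a' t' =>
    rw [List.forall_mem_cons] at hb'
    have ha' : a' = 2 := by simpa [hx'] using (ceil_hjInt_cons a' hb'.2).symm
    subst ha'
    have : (hjInt t')⁻¹ = 0 := by simpa using hx'
    rw [(inv_hjInt_eq_zero_iff hb'.2).1 this]

lemma hjInt_dual_succ_head {a : ℤ} {t b' : List ℤ} (ht : ∀ x ∈ a :: t, 2 ≤ x)
    (hb' : ∀ x ∈ b', 2 ≤ x) (h : (hjInt ((a + 1) :: t) - 1) * (hjInt b' - 1) = 1) :
    ∃ t', b' = 2 :: t' ∧ (hjInt (a :: t) - 1) * (hjInt t' - 1) = 1 := by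
  set z := hjInt (a :: t)
  have hz : 1 < z := one_lt_hjInt_cons ht
  have hx : hjInt ((a + 1) :: t) = z + 1 := by simp only [hjInt_cons, Int.cast_add, Int.cast_one, z]; ring
  rw [hx, add_sub_cancel_right] at h
  have hx' : hjInt b' = 1 + z⁻¹ := by rw [inv_eq_of_mul_eq_one_right h]; ring
  have hz0 : 0 < z⁻¹ := by positivity
  have hz1 : z⁻¹ < 1 := inv_lt_one_of_one_lt₀ hz
  cases b' with
  | nil => rw [hjInt_nil] at hx'; linarith
  | cons a' t' =>
    rw [List.forall_mem_cons] at hb'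
    have ha' : a' = 2 := by
      rw [← ceil_hjInt_cons a' hb'.2, hx', Int.ceil_eq_iff]
      constructor <;> push_cast <;> linarith
    subst ha'
    refine ⟨t', rfl, ?_⟩
    rw [hjInt_cons] at hx'
    have hw : (hjInt t')⁻¹ = 1 - z⁻¹ := by push_cast at hx'; linarith
    have hw0 : hjInt t' ≠ 0 := by
      intro h0; rw [h0, inv_zero] at hw; linarith
    field_simp at hw
    linear_combination -hw

lemma hjInt_dual_two_cons {c : ℤ} {t b' : List ℤ} (ht : ∀ x ∈ c :: t, 2 ≤ x)
    (hb' : ∀ x ∈ b', 2 ≤ x) (h : (hjInt (2 :: c :: t) - 1) * (hjInt b' - 1) = 1) :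
    ∃ a' t', b' = (a' + 1) :: t' ∧ 2 ≤ a' ∧ (hjInt (c :: t) - 1) * (hjInt (a' :: t') - 1) = 1 := by
  set y := hjInt (c :: t)
  have hy : 1 < y := one_lt_hjInt_cons ht
  have hy0 : 0 < y⁻¹ := by positivity
  have hy1 : y⁻¹ < 1 := inv_lt_one_of_one_lt₀ hy
  have hx : hjInt (2 :: c :: t) - 1 = 1 - y⁻¹ := by rw [hjInt_cons]; push_cast; ring
  rw [hx] at h
  have hx' : 2 < hjInt b' := by
    have : 1 < hjInt b' - 1 := by
      rw [← inv_eq_of_mul_eq_one_right h]; exact one_lt_inv₀ (by linarith) |>.2 (by linarith)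
    linarith
  cases b' with
  | nil => norm_num at hx'
  | cons a' t' =>
    rw [List.forall_mem_cons] at hb'
    have ha' : 2 < a' := by
      rw [← ceil_hjInt_cons a' hb'.2]; exact Int.lt_ceil.2 (by exact_mod_cast hx')
    refine ⟨a' - 1, t', by simp, by omega, ?_⟩
    have hy00 : y ≠ 0 := by positivity
    rw [hjInt_cons] at h ⊢
    push_cast
    field_simp at h
    linear_combination h

def DualLengthFormula (b : List ℤ) : Prop :=
  ∀ b' : List ℤ, (∀ x ∈ b', 2 ≤ x) → (hjInt b - 1) * (hjInt b' - 1) = 1 →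
    (b'.length : ℤ) = b.sum - 2 * b.length + 1

lemma dualLengthFormula_two : DualLengthFormula [2] := by
  intro b' hb' h
  simp [hjInt_dual_two hb' h]

lemma DualLengthFormula.succ_head {a : ℤ} {t : List ℤ} (ht : ∀ x ∈ a :: t, 2 ≤ x)
    (H : DualLengthFormula (a :: t)) : DualLengthFormula ((a + 1) :: t) := by
  intro b' hb' h
  obtain ⟨t', rfl, h'⟩ := hjInt_dual_succ_head ht hb' h
  have := H t' (fun x hx => hb' x (by simp [hx])) h'
  simp only [List.length_cons, List.sum_cons] at this ⊢
  push_cast at this ⊢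
  linarith

lemma DualLengthFormula.two_cons {c : ℤ} {t : List ℤ} (ht : ∀ x ∈ c :: t, 2 ≤ x)
    (H : DualLengthFormula (c :: t)) : DualLengthFormula (2 :: c :: t) := by
  intro b' hb' h
  obtain ⟨a', t', rfl, ha', h'⟩ := hjInt_dual_two_cons ht hb' h
  rw [List.forall_mem_cons] at hb'
  have := H (a' :: t') (List.forall_mem_cons.2 ⟨ha', hb'.2⟩) h'
  simp only [List.length_cons, List.sum_cons] at this ⊢
  push_cast at this ⊢
  linarith

lemma DualLengthFormula.of_head_two {t : List ℤ} (ht : ∀ x ∈ t, 2 ≤ x)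
    (H : DualLengthFormula (2 :: t)) {a : ℤ} (ha : 2 ≤ a) : DualLengthFormula (a :: t) := by
  induction a, ha using Int.leInduction with
  | base => exact H
  | succ a ha ih => exact ih.succ_head (List.forall_mem_cons.2 ⟨ha, ht⟩)

theorem dualLengthFormula_of_two_le : ∀ {b : List ℤ}, b ≠ [] → (∀ x ∈ b, 2 ≤ x) → DualLengthFormula b
  | [], hne, _ => absurd rfl hne
  | [a], _, hb => dualLengthFormula_two.of_head_two (by simp) (hb a (by simp))
  | a :: c :: t, _, hb => by
    rw [List.forall_mem_cons] at hb
    have hc := dualLengthFormula_of_two_le (List.cons_ne_nil c t) hb.2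
    exact (hc.two_cons hb.2).of_head_two hb.2 hb.1

/- `b.map fun x => (x : ℚ)` elaborates by first coercing the list `b` to `List ℚ` (through the
monad lift) and then mapping the identity, so it is not syntactically `b.map (↑)`. -/
lemma hj_map_cast (b : List ℤ) : hj (b.map fun x => (x : ℚ)) = hjInt b := by
  simp [hjInt, List.map_eq_flatMap]

theorem hj_dual_length_general (n q : ℤ) (hq : 0 < q) (hn : q < n)
    (b b' : List ℤ) (hbne : b ≠ [])
    (hb : ∀ x ∈ b, 2 ≤ x) (hb' : ∀ x ∈ b', 2 ≤ x)
    (h1 : hj (b.map fun x => (x : ℚ)) = (n : ℚ) / (q : ℚ))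
    (h2 : hj (b'.map fun x => (x : ℚ)) = (n : ℚ) / ((n : ℚ) - (q : ℚ))) :
    (b'.length : ℤ) = b.sum - 2 * b.length + 1 := by
  have hq0 : (q : ℚ) ≠ 0 := by positivity
  have hnq0 : (n : ℚ) - q ≠ 0 := sub_ne_zero.2 (by exact_mod_cast hn.ne')
  refine dualLengthFormula_of_two_le hbne hb b' hb' ?_
  rw [← hj_map_cast, ← hj_map_cast, h1, h2]
  field_simp
  ring

/-- If `n > q > 0` are coprime with Hirzebruch–Jung expansions
`n/q = [[b_1, …, b_r]]` and `n/(n−q) = [[b'_1, …, b'_s]]` (all partial quotients `≥ 2`),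
then `s = (Σ_{i=1}^r b_i) − 2r + 1`. -/
theorem hj_dual_length (n q : ℤ) (hq : 0 < q) (hn : q < n) (hcop : IsCoprime n q)
    (b b' : List ℤ) (hbne : b ≠ []) (hb'ne : b' ≠ [])
    (hb : ∀ x ∈ b, 2 ≤ x) (hb' : ∀ x ∈ b', 2 ≤ x)
    (h1 : hj (b.map fun x => (x : ℚ)) = (n : ℚ) / (q : ℚ))
    (h2 : hj (b'.map fun x => (x : ℚ)) = (n : ℚ) / ((n : ℚ) - (q : ℚ))) :
    (b'.length : ℤ) = b.sum - 2 * b.length + 1 :=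
  hj_dual_length_general n q hq hn b b' hbne hb hb' h1 h2
end

section
/- Let T be a triangulation of a convex polygon P and let [a,b] be an inner diagonal of T belonging to the quadrilateral with vertices a, c, b, d in T. Mutation (flip) at [a,b] replaces [a,b] by [c,d] and changes the quiddity as follows: the quiddity at a and at b each decrease by 1, the quiddity at c and at d each increase by 1, and the quiddity at every other vertex is unchanged. Moreover, flipping [c,d] in the new triangulation returns the original triangulation T. -/
open scoped Classical

/-- Two diagonals `p, q` of a convex `m`-gon (each recorded as an ordered pair of
vertices, smaller first) cross iff their endpoints strictly interleave. -/
def Cross {m : ℕ} (p q : Fin m × Fin m) : Prop :=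
  ((p.1 : ℕ) < (q.1 : ℕ) ∧ (q.1 : ℕ) < (p.2 : ℕ) ∧ (p.2 : ℕ) < (q.2 : ℕ)) ∨
  ((q.1 : ℕ) < (p.1 : ℕ) ∧ (p.1 : ℕ) < (q.2 : ℕ) ∧ (q.2 : ℕ) < (p.2 : ℕ))

/-- A triangulation of a convex `m`-gon (vertices `0, …, m−1` in cyclic order):
a maximal set of pairwise non-crossing inner diagonals, each recorded as an
ordered pair of non-adjacent vertices. -/
structure Triangulation (m : ℕ) where
  diag : Finset (Fin m × Fin m)
  mem_lt : ∀ p ∈ diag, (p.1 : ℕ) + 1 < (p.2 : ℕ)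
  not_boundary : ∀ p ∈ diag, ¬((p.1 : ℕ) = 0 ∧ (p.2 : ℕ) + 1 = m)
  noncross : ∀ p ∈ diag, ∀ q ∈ diag, ¬ Cross p q
  maximal : ∀ p : Fin m × Fin m, (p.1 : ℕ) + 1 < (p.2 : ℕ) →
    ¬((p.1 : ℕ) = 0 ∧ (p.2 : ℕ) + 1 = m) → p ∉ diag → ∃ q ∈ diag, Cross p q

/-- `u` and `v` are consecutive vertices (a boundary side) of the `m`-gon. -/
def IsSide {m : ℕ} (u v : Fin m) : Prop :=
  ((u : ℕ) + 1) % m = (v : ℕ) ∨ ((v : ℕ) + 1) % m = (u : ℕ)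

/-- The ordered pair (smaller vertex first) underlying an unordered pair. -/
def sp {m : ℕ} (u v : Fin m) : Fin m × Fin m :=
  if (u : ℕ) < (v : ℕ) then (u, v) else (v, u)

/-- `u` and `v` are joined by an edge of the triangulated polygon:
either a boundary side or a diagonal of the triangulation. -/
def IsEdge {m : ℕ} (T : Triangulation m) (u v : Fin m) : Prop :=
  IsSide u v ∨ sp u v ∈ T.diag

/-- `u, v, w` span a triangle of the triangulation (for vertices in convex
position this means exactly that all three connecting edges are present). -/
def IsTri {m : ℕ} (T : Triangulation m) (u v w : Fin m) : Prop :=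
  IsEdge T u v ∧ IsEdge T v w ∧ IsEdge T u w

/-- The triangles of the triangulation, as increasingly ordered triples. -/
noncomputable def triangles {m : ℕ} (T : Triangulation m) :
    Finset (Fin m × Fin m × Fin m) :=
  Finset.univ.filter fun t =>
    (t.1 : ℕ) < (t.2.1 : ℕ) ∧ (t.2.1 : ℕ) < (t.2.2 : ℕ) ∧ IsTri T t.1 t.2.1 t.2.2

/-- The quiddity of a vertex: the number of triangles of the triangulation
incident to it. -/
noncomputable def quiddity {m : ℕ} (T : Triangulation m) (v : Fin m) : ℕ :=
  ((triangles T).filter fun t => v = t.1 ∨ v = t.2.1 ∨ v = t.2.2).card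

/-!
Edges of a triangulation never cross. So two distinct apexes of an edge lie on opposite sides of it,
an edge has at most two apexes, and the apexes `c, d` of `[a,b]` span a chord crossing `[a,b]`.
A chord that crosses one diagonal of the convex quadrilateral `a c b d` and none of its sides is
the other diagonal; hence `[c,d]` crosses no diagonal of `T` except `[a,b]`, and a chord crossing
only `[a,b]` is `[c,d]`, so the flipped set is again a triangulation, in which `a, b` are the
apexes of `[c,d]`. Triangles are the 3-cliques of the edge graph, and the flip trades the two
triangles through `[a,b]` for the two through `[c,d]`.
-/

open Finset

namespace SimpleGraph

variable {V : Type*} [Fintype V] [DecidableEq V] {G G' : SimpleGraph V} {a b e f : V}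

lemma exists_mem_commonNeighbors_of_mem_cliqueFinset {s : Finset V}
    (hs : s ∈ G.cliqueFinset 3) (hab : a ≠ b) (ha : a ∈ s) (hb : b ∈ s) :
    ∃ w ∈ G.commonNeighbors a b, s = {a, b, w} := by
  rw [mem_cliqueFinset_iff, isNClique_iff] at hs
  have hb' : b ∈ s.erase a := mem_erase.2 ⟨hab.symm, hb⟩
  obtain ⟨w, hw⟩ := card_eq_one.1 <| by
    rw [card_erase_of_mem hb', card_erase_of_mem ha, hs.2]
  have hws : w ∈ (s.erase a).erase b := hw ▸ mem_singleton_self w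
  simp only [mem_erase] at hws
  refine ⟨w, ⟨hs.1 ha hws.2.2 hws.2.1.symm, hs.1 hb hws.2.2 hws.1.symm⟩, ?_⟩
  rw [← hw, insert_erase hb', insert_erase ha]

lemma filter_cliqueFinset_three_mem_mem (hab : G.Adj a b)
    (hcn : G.commonNeighbors a b = {e, f}) :
    {s ∈ G.cliqueFinset 3 | a ∈ s ∧ b ∈ s} = {{a, b, e}, {a, b, f}} := by
  have hmem : ∀ w, w ∈ G.commonNeighbors a b ↔ w = e ∨ w = f := fun w => by
    rw [hcn]; rfl
  ext s
  simp only [mem_filter, mem_insert, mem_singleton]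
  constructor
  · rintro ⟨hs, ha, hb⟩
    obtain ⟨w, hw, rfl⟩ := exists_mem_commonNeighbors_of_mem_cliqueFinset hs hab.ne ha hb
    rcases (hmem w).1 hw with rfl | rfl <;> simp
  · have triangle : ∀ w, w = e ∨ w = f → {a, b, w} ∈ G.cliqueFinset 3 := fun w hw => by
      obtain ⟨haw, hbw⟩ := (hmem w).2 hw
      exact mem_cliqueFinset_iff.2 (is3Clique_triple_iff.2 ⟨hab, haw, hbw⟩)
    rintro (rfl | rfl)
    · exact ⟨triangle e (Or.inl rfl), by simp, by simp⟩
    · exact ⟨triangle f (Or.inr rfl), by simp, by simp⟩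

lemma card_filter_mem_cliqueFinset_three (hab : G.Adj a b)
    (hcn : G.commonNeighbors a b = {e, f}) (hef : e ≠ f) (v : V) :
    #{s ∈ G.cliqueFinset 3 | v ∈ s} = #{s ∈ G.cliqueFinset 3 | v ∈ s ∧ ¬(a ∈ s ∧ b ∈ s)} +
      ((if v ∈ ({a, b, e} : Finset V) then 1 else 0) +
        (if v ∈ ({a, b, f} : Finset V) then 1 else 0)) := by
  have hf : f ∈ G.commonNeighbors a b := by rw [hcn]; simp
  have hne : ({a, b, e} : Finset V) ≠ {a, b, f} := fun h => by
    have : f ∈ ({a, b, e} : Finset V) := h ▸ by simp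
    simp only [mem_insert, mem_singleton] at this
    rcases this with rfl | rfl | rfl
    exacts [G.irrefl hf.1, G.irrefl hf.2, hef rfl]
  rw [← card_filter_add_card_filter_not (fun s => a ∈ s ∧ b ∈ s), add_comm, filter_filter]
  congr 1
  rw [filter_comm, filter_cliqueFinset_three_mem_mem hab hcn, card_filter, sum_pair hne]

lemma card_filter_cliqueFinset_three_eq_of_edgeSet_eq
    (hflip : G'.edgeSet = insert s(e, f) (G.edgeSet \ {s(a, b)})) (hab : a ≠ b) (hef : e ≠ f)
    (hnadj : ¬ G.Adj e f) (hne : s(a, b) ≠ s(e, f)) (v : V) :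
    #{s ∈ G.cliqueFinset 3 | v ∈ s ∧ ¬(a ∈ s ∧ b ∈ s)} =
      #{s ∈ G'.cliqueFinset 3 | v ∈ s ∧ ¬(e ∈ s ∧ f ∈ s)} := by
  have hadj : ∀ x y, G'.Adj x y ↔ s(x, y) = s(e, f) ∨ (G.Adj x y ∧ s(x, y) ≠ s(a, b)) := by
    intro x y
    rw [← mem_edgeSet, hflip, Set.mem_insert_iff, Set.mem_sdiff, mem_edgeSet,
      Set.mem_singleton_iff]
  have hnadj' : ¬ G'.Adj a b := by rw [hadj]; tauto
  have hagree : ∀ s : Finset V, ¬(a ∈ s ∧ b ∈ s) → ¬(e ∈ s ∧ f ∈ s) →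
      (G.IsNClique 3 s ↔ G'.IsNClique 3 s) := by
    intro s hs_ab hs_ef
    have hadj_s : ∀ x ∈ s, ∀ y ∈ s, (G.Adj x y ↔ G'.Adj x y) := by
      intro x hx y hy
      have hxy_ab : s(x, y) ≠ s(a, b) := by
        rw [Ne, Sym2.eq_iff]; rintro (⟨rfl, rfl⟩ | ⟨rfl, rfl⟩) <;> tauto
      have hxy_ef : s(x, y) ≠ s(e, f) := by
        rw [Ne, Sym2.eq_iff]; rintro (⟨rfl, rfl⟩ | ⟨rfl, rfl⟩) <;> tauto
      rw [hadj]; tauto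
    simp only [isNClique_iff, isClique_iff]
    constructor <;> rintro ⟨hc, hcard⟩ <;> refine ⟨fun x hx y hy hxy => ?_, hcard⟩
    · exact (hadj_s x hx y hy).1 (hc hx hy hxy)
    · exact (hadj_s x hx y hy).2 (hc hx hy hxy)
  congr 1
  ext s
  simp only [mem_filter, mem_cliqueFinset_iff]
  constructor
  · rintro ⟨hs, hv, hs_ab⟩
    have hs_ef : ¬(e ∈ s ∧ f ∈ s) := fun h => hnadj (hs.1 h.1 h.2 hef)
    exact ⟨(hagree s hs_ab hs_ef).1 hs, hv, hs_ef⟩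
  · rintro ⟨hs, hv, hs_ef⟩
    have hs_ab : ¬(a ∈ s ∧ b ∈ s) := fun h => hnadj' (hs.1 h.1 h.2 hab)
    exact ⟨(hagree s hs_ab hs_ef).2 hs, hv, hs_ab⟩

theorem card_filter_cliqueFinset_three_add_eq_of_edgeSet_eq
    (hflip : G'.edgeSet = insert s(e, f) (G.edgeSet \ {s(a, b)}))
    (hab : G.Adj a b) (hnadj : ¬ G.Adj e f) (hef : e ≠ f)
    (hG : G.commonNeighbors a b = {e, f}) (hG' : G'.commonNeighbors e f = {a, b}) (v : V) :
    #{s ∈ G'.cliqueFinset 3 | v ∈ s} +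
        ((if v ∈ ({a, b, e} : Finset V) then 1 else 0) +
          (if v ∈ ({a, b, f} : Finset V) then 1 else 0)) =
      #{s ∈ G.cliqueFinset 3 | v ∈ s} +
        ((if v ∈ ({e, f, a} : Finset V) then 1 else 0) +
          (if v ∈ ({e, f, b} : Finset V) then 1 else 0)) := by
  have he : e ∈ G.commonNeighbors a b := by rw [hG]; simp
  have hne : s(a, b) ≠ s(e, f) := by
    rw [Ne, Sym2.eq_iff]
    rintro (⟨rfl, -⟩ | ⟨-, rfl⟩)
    exacts [G.irrefl he.1, G.irrefl he.2]
  have hadj' : G'.Adj e f := by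
    rw [← mem_edgeSet, hflip]; exact Set.mem_insert _ _
  rw [card_filter_mem_cliqueFinset_three hab hG hef,
    card_filter_mem_cliqueFinset_three hadj' hG' hab.ne,
    card_filter_cliqueFinset_three_eq_of_edgeSet_eq hflip hab.ne hef hnadj hne]
  ring

end SimpleGraph

section Triangulation

variable {m : ℕ}

lemma sp_of_lt {u v : Fin m} (h : (u : ℕ) < v) : sp u v = (u, v) := if_pos h

lemma sp_fst (u v : Fin m) : ((sp u v).1 : ℕ) = min (u : ℕ) v := by
  unfold sp; split_ifs <;> dsimp only <;> omega

lemma sp_snd (u v : Fin m) : ((sp u v).2 : ℕ) = max (u : ℕ) v := by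
  unfold sp; split_ifs <;> dsimp only <;> omega

lemma sp_eq_sp_iff {u v x y : Fin m} : sp u v = sp x y ↔ s(u, v) = s(x, y) := by
  simp only [Prod.ext_iff, Fin.ext_iff, sp_fst, sp_snd, Sym2.eq_iff]
  omega

lemma sp_comm (u v : Fin m) : sp u v = sp v u := sp_eq_sp_iff.2 Sym2.eq_swap

lemma Cross.symm {p q : Fin m × Fin m} (h : Cross p q) : Cross q p := Or.symm h

def Crosses (u v x y : Fin m) : Prop := Cross (sp u v) (sp x y)

lemma crosses_iff {u v x y : Fin m} :
    Crosses u v x y ↔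
      (min (u : ℕ) v < min (x : ℕ) y ∧ min (x : ℕ) y < max (u : ℕ) v ∧
        max (u : ℕ) v < max (x : ℕ) y) ∨
      (min (x : ℕ) y < min (u : ℕ) v ∧ min (u : ℕ) v < max (x : ℕ) y ∧
        max (x : ℕ) y < max (u : ℕ) v) := by
  simp only [Crosses, Cross, sp_fst, sp_snd]

lemma crosses_iff_of_lt {u v x y : Fin m} (huv : (u : ℕ) < v) (hxy : (x : ℕ) < y) :
    Crosses u v x y ↔
      (u : ℕ) < x ∧ (x : ℕ) < v ∧ (v : ℕ) < y ∨ (x : ℕ) < u ∧ (u : ℕ) < y ∧ (y : ℕ) < v := by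
  rw [Crosses, sp_of_lt huv, sp_of_lt hxy]; rfl

lemma crosses_comm {u v x y : Fin m} : Crosses u v x y ↔ Crosses x y u v :=
  ⟨Cross.symm, Cross.symm⟩

lemma crosses_swap_left {u v x y : Fin m} : Crosses u v x y ↔ Crosses v u x y := by
  rw [Crosses, Crosses, sp_comm]

lemma crosses_swap_right {u v x y : Fin m} : Crosses u v x y ↔ Crosses u v y x := by
  rw [Crosses, Crosses, sp_comm x]

lemma Crosses.rev {u v x y : Fin m} (h : Crosses u v x y) : Crosses y x v u :=
  crosses_swap_left.1 (crosses_swap_right.1 (crosses_comm.1 h))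

lemma Crosses.right_ne {u v x y : Fin m} (h : Crosses u v x y) : x ≠ y := by
  rintro rfl; rw [crosses_iff] at h; omega

lemma Crosses.left_ne {u v x y : Fin m} (h : Crosses u v x y) : u ≠ v :=
  (crosses_comm.1 h).right_ne

lemma not_crosses_of_crosses_of_crosses {u v x y z : Fin m} (hy : Crosses u v x y)
    (hz : Crosses u v x z) : ¬ Crosses u v y z := by
  rw [crosses_iff] at *; omega

lemma crosses_or_crosses_of_not_crosses {u v x y : Fin m} (h : ¬ Crosses u v x y)
    (huv : u ≠ v) (hux : u ≠ x) (huy : u ≠ y) (hvx : v ≠ x) (hvy : v ≠ y) (hxy : x ≠ y) :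
    Crosses u x y v ∨ Crosses u y x v := by
  wlog hlt : (u : ℕ) < v generalizing u v
  · rw [crosses_swap_left] at h
    refine (this h huv.symm hvx hvy hux huy ?_).symm.imp Crosses.rev Crosses.rev
    have := Fin.val_ne_of_ne huv; omega
  wlog hlt' : (x : ℕ) < y generalizing x y
  · rw [crosses_swap_right] at h
    refine (this hxy.symm h huy hux hvy hvx ?_).symm
    have := Fin.val_ne_of_ne hxy; omega
  rw [crosses_iff_of_lt hlt hlt'] at h
  simp only [crosses_iff, ne_eq, Fin.ext_iff] at *
  omega

lemma sp_eq_of_crosses_of_not_crosses_sides {a b e f x y : Fin m} (h : Crosses a b e f)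
    (hx : Crosses x y e f)
    (hsides : ∀ u w, (u = a ∨ u = b) → (w = e ∨ w = f) → ¬ Crosses x y u w) :
    sp x y = sp a b := by
  wlog hab : (a : ℕ) < b generalizing a b
  · rw [sp_comm a]
    refine this (crosses_swap_left.1 h) (fun u w hu => hsides u w hu.symm) ?_
    have := Fin.val_ne_of_ne h.left_ne; omega
  wlog hef : (e : ℕ) < f generalizing e f
  · refine this (crosses_swap_right.1 hx) (crosses_swap_right.1 h)
      (fun u w hu hw => hsides u w hu hw.symm) ?_
    have := Fin.val_ne_of_ne h.right_ne; omega
  wlog hxy : (x : ℕ) < y generalizing x y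
  · rw [sp_comm x]
    refine this (crosses_swap_left.1 hx)
      (fun u w hu hw => by rw [← crosses_swap_left]; exact hsides u w hu hw) ?_
    have := Fin.val_ne_of_ne hx.left_ne; omega
  have h1 := hsides a e (.inl rfl) (.inl rfl)
  have h2 := hsides b e (.inr rfl) (.inl rfl)
  have h3 := hsides b f (.inr rfl) (.inr rfl)
  have h4 := hsides a f (.inl rfl) (.inr rfl)
  rw [sp_of_lt hxy, sp_of_lt hab]
  rw [crosses_iff_of_lt hab hef] at h
  rw [crosses_iff_of_lt hxy hef] at hx
  simp only [crosses_iff] at h1 h2 h3 h4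
  rcases h with h | h <;>
  · simp (disch := omega) only [min_eq_left, min_eq_right, max_eq_left, max_eq_right]
      at h1 h2 h3 h4
    simp only [Prod.ext_iff, Fin.ext_iff]
    omega

lemma sp_ne_of_crosses {a b e f u : Fin m} (h : Crosses a b e f) (hu : u = e ∨ u = f)
    (w : Fin m) : sp u w ≠ sp a b := by
  rw [Ne, sp_eq_sp_iff, Sym2.eq_iff]
  rw [crosses_iff] at h
  rcases hu with rfl | rfl <;> simp only [Fin.ext_iff] <;> omega

lemma succ_mod_eq_cases {i j : Fin m} (h : ((i : ℕ) + 1) % m = j) :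
    (i : ℕ) + 1 = j ∨ ((i : ℕ) + 1 = m ∧ (j : ℕ) = 0) := by
  rcases Nat.lt_or_ge ((i : ℕ) + 1) m with hlt | hge
  · exact .inl (by rwa [Nat.mod_eq_of_lt hlt] at h)
  · have heq : (i : ℕ) + 1 = m := by have := i.isLt; omega
    exact .inr ⟨heq, by rw [← h, heq, Nat.mod_self]⟩

lemma IsSide.not_crosses {u v : Fin m} (h : IsSide u v) (x y : Fin m) :
    ¬ Crosses u v x y := by
  have := x.isLt; have := y.isLt
  rw [crosses_iff]
  rcases h with h | h <;> rcases succ_mod_eq_cases h with h' | h' <;> omega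

lemma IsEdge.ne {T : Triangulation m} {u v : Fin m} (h : IsEdge T u v) (hm : 1 < m) :
    u ≠ v := by
  rintro rfl
  rcases h with h | h
  · rcases h with h | h <;> rcases succ_mod_eq_cases h with h' | h' <;> omega
  · have := T.mem_lt _ h
    rw [sp_fst, sp_snd] at this
    omega

lemma isEdge_comm {T : Triangulation m} {u v : Fin m} : IsEdge T u v ↔ IsEdge T v u := by
  rw [IsEdge, IsEdge, IsSide, IsSide, or_comm (a := _ % m = _), sp_comm]

lemma sp_eq_of_mem_diag {T : Triangulation m} {p : Fin m × Fin m} (hp : p ∈ T.diag) :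
    sp p.1 p.2 = p :=
  sp_of_lt (by have := T.mem_lt p hp; omega)

lemma IsEdge.not_crosses {T : Triangulation m} {u v x y : Fin m} (huv : IsEdge T u v)
    (hxy : IsEdge T x y) : ¬ Crosses u v x y := by
  rcases huv with huv | huv
  · exact huv.not_crosses x y
  rcases hxy with hxy | hxy
  · exact fun h => hxy.not_crosses u v (crosses_comm.1 h)
  · exact T.noncross _ huv _ hxy

lemma sp_isDiagonal_of_crosses {u v x y : Fin m} (h : Crosses u v x y) :
    ((sp x y).1 : ℕ) + 1 < (sp x y).2 ∧
      ¬(((sp x y).1 : ℕ) = 0 ∧ ((sp x y).2 : ℕ) + 1 = m) := by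
  have := u.isLt; have := v.isLt
  rw [crosses_iff] at h
  rw [sp_fst, sp_snd]
  omega

def edgeGraph (T : Triangulation m) : SimpleGraph (Fin m) := SimpleGraph.fromRel (IsEdge T)

lemma edgeGraph_adj {T : Triangulation m} {u v : Fin m} :
    (edgeGraph T).Adj u v ↔ u ≠ v ∧ IsEdge T u v := by
  rw [edgeGraph, SimpleGraph.fromRel_adj, isEdge_comm (u := v), or_self]

lemma crosses_of_mem_commonNeighbors (T : Triangulation m) {u v x y : Fin m} (huv : u ≠ v)
    (hx : x ∈ (edgeGraph T).commonNeighbors u v) (hy : y ∈ (edgeGraph T).commonNeighbors u v)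
    (hxy : x ≠ y) : Crosses u v x y := by
  simp only [SimpleGraph.mem_commonNeighbors, edgeGraph_adj] at hx hy
  by_contra h
  rcases crosses_or_crosses_of_not_crosses h huv hx.1.1 hy.1.1 hx.2.1 hy.2.1 hxy with h' | h'
  · exact hx.1.2.not_crosses (isEdge_comm.1 hy.2.2) h'
  · exact hy.1.2.not_crosses (isEdge_comm.1 hx.2.2) h'

lemma commonNeighbors_eq_pair (T : Triangulation m) {u v x y : Fin m} (huv : u ≠ v)
    (hx : x ∈ (edgeGraph T).commonNeighbors u v) (hy : y ∈ (edgeGraph T).commonNeighbors u v)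
    (hxy : x ≠ y) : (edgeGraph T).commonNeighbors u v = {x, y} := by
  ext w
  refine ⟨fun hw => ?_, by rintro (rfl | rfl) <;> assumption⟩
  by_contra hne
  simp only [Set.mem_insert_iff, Set.mem_singleton_iff, not_or] at hne
  exact not_crosses_of_crosses_of_crosses (crosses_of_mem_commonNeighbors T huv hw hx hne.1)
    (crosses_of_mem_commonNeighbors T huv hw hy hne.2)
    (crosses_of_mem_commonNeighbors T huv hx hy hxy)

lemma mem_triangles {T : Triangulation m} {t : Fin m × Fin m × Fin m} :
    t ∈ triangles T ↔ (t.1 : ℕ) < t.2.1 ∧ (t.2.1 : ℕ) < t.2.2 ∧ IsTri T t.1 t.2.1 t.2.2 := by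
  simp [triangles]

lemma quiddity_eq_card (T : Triangulation m) (v : Fin m) :
    quiddity T v = #{s ∈ (edgeGraph T).cliqueFinset 3 | v ∈ s} := by
  have adj_of_isEdge : ∀ {x y : Fin m}, (x : ℕ) < y → IsEdge T x y → (edgeGraph T).Adj x y :=
    fun hlt h => edgeGraph_adj.2 ⟨Fin.ne_of_lt hlt, h⟩
  refine card_bij (fun t _ => {t.1, t.2.1, t.2.2}) ?_ ?_ ?_
  · rintro ⟨x, y, z⟩ ht
    rw [mem_filter, mem_triangles] at ht
    obtain ⟨⟨hxy, hyz, exy, eyz, exz⟩, hv⟩ := ht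
    simp only [mem_filter, SimpleGraph.mem_cliqueFinset_iff, SimpleGraph.is3Clique_triple_iff,
      mem_insert, mem_singleton]
    exact ⟨⟨adj_of_isEdge hxy exy, adj_of_isEdge (hxy.trans hyz) exz, adj_of_isEdge hyz eyz⟩, hv⟩
  · rintro ⟨x, y, z⟩ ht ⟨x', y', z'⟩ ht' h
    rw [mem_filter, mem_triangles] at ht ht'
    simp only [Finset.ext_iff, mem_insert, mem_singleton] at h
    have h1 := (h x).1 (by simp); have h2 := (h y).1 (by simp); have h3 := (h z).1 (by simp)
    have h4 := (h x').2 (by simp); have h5 := (h y').2 (by simp); have h6 := (h z').2 (by simp)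
    simp only [Fin.ext_iff, Prod.mk.injEq] at h1 h2 h3 h4 h5 h6 ht ht' ⊢
    omega
  · intro s hs
    rw [mem_filter, SimpleGraph.mem_cliqueFinset_iff, SimpleGraph.isNClique_iff] at hs
    obtain ⟨⟨hclique, hcard⟩, hv⟩ := hs
    set g := s.orderEmbOfFin hcard
    have hg : ∀ i, g i ∈ s := s.orderEmbOfFin_mem hcard
    have hlt01 : g 0 < g 1 := g.strictMono (by decide)
    have hlt12 : g 1 < g 2 := g.strictMono (by decide)
    have hset : {g 0, g 1, g 2} = s := by
      refine eq_of_subset_of_card_le (by simp [insert_subset_iff, hg]) ?_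
      rw [hcard, card_eq_three.2 ⟨_, _, _, hlt01.ne, (hlt01.trans hlt12).ne, hlt12.ne, rfl⟩]
    have edge : ∀ i j, i ≠ j → IsEdge T (g i) (g j) := fun i j hij =>
      (edgeGraph_adj.1 (hclique (hg i) (hg j) (g.injective.ne hij))).2
    refine ⟨(g 0, g 1, g 2), ?_, hset⟩
    rw [mem_filter, mem_triangles]
    refine ⟨⟨hlt01, hlt12, edge 0 1 (by decide), edge 1 2 (by decide), edge 0 2 (by decide)⟩, ?_⟩
    rw [← hset] at hv
    simpa using hv

section Flip

variable {T : Triangulation m} {a b e f : Fin m}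

lemma isEdge_of_mem_commonNeighbors (he : e ∈ (edgeGraph T).commonNeighbors a b)
    (hf : f ∈ (edgeGraph T).commonNeighbors a b) :
    ∀ u w, (u = a ∨ u = b) → (w = e ∨ w = f) → IsEdge T u w := by
  simp only [SimpleGraph.mem_commonNeighbors, edgeGraph_adj] at he hf
  rintro u w (rfl | rfl) (rfl | rfl)
  exacts [he.1.2, hf.1.2, he.2.2, hf.2.2]

lemma not_cross_sp_of_mem_erase (hab : (a, b) ∈ T.diag)
    (he : e ∈ (edgeGraph T).commonNeighbors a b) (hf : f ∈ (edgeGraph T).commonNeighbors a b)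
    (hcross : Crosses a b e f) {q : Fin m × Fin m} (hq : q ∈ T.diag.erase (a, b)) :
    ¬ Cross (sp e f) q := by
  have hsides := isEdge_of_mem_commonNeighbors he hf
  obtain ⟨hne, hq⟩ := mem_erase.1 hq
  have hsorted := sp_eq_of_mem_diag hq
  have hqedge : IsEdge T q.1 q.2 := .inr (by rw [hsorted]; exact hq)
  intro h
  have hx : Crosses q.1 q.2 e f := by rw [Crosses, hsorted]; exact h.symm
  refine hne ?_
  rw [← hsorted, ← sp_eq_of_mem_diag hab]
  exact sp_eq_of_crosses_of_not_crosses_sides hcross hx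
    fun u w hu hw => hqedge.not_crosses (hsides u w hu hw)

lemma exists_cross_of_not_mem_flip (hab : (a, b) ∈ T.diag)
    (he : e ∈ (edgeGraph T).commonNeighbors a b) (hf : f ∈ (edgeGraph T).commonNeighbors a b)
    (hcross : Crosses a b e f) {p : Fin m × Fin m} (hlt : (p.1 : ℕ) + 1 < p.2)
    (hnb : ¬((p.1 : ℕ) = 0 ∧ (p.2 : ℕ) + 1 = m))
    (hp : p ∉ insert (sp e f) (T.diag.erase (a, b))) :
    ∃ q ∈ insert (sp e f) (T.diag.erase (a, b)), Cross p q := by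
  have hsides := isEdge_of_mem_commonNeighbors he hf
  by_contra hno
  push Not at hno
  have hsorted : sp p.1 p.2 = p := sp_of_lt (by omega)
  have hpab : p ≠ (a, b) := by
    rintro rfl
    exact hno _ (mem_insert_self _ _) (by rw [← sp_eq_of_mem_diag hab]; exact hcross)
  obtain ⟨q, hq, hpq⟩ :=
    T.maximal p hlt hnb fun h => hp (mem_insert_of_mem (mem_erase.2 ⟨hpab, h⟩))
  obtain rfl : q = (a, b) := by
    by_contra h
    exact hno q (mem_insert_of_mem (mem_erase.2 ⟨h, hq⟩)) hpq
  have hpab : Crosses p.1 p.2 a b := by rw [Crosses, hsorted, sp_eq_of_mem_diag hab]; exact hpq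
  have hside : ∀ u w, (u = e ∨ u = f) → (w = a ∨ w = b) → ¬ Crosses p.1 p.2 u w := by
    intro u w hu hw
    rcases isEdge_comm.1 (hsides w u hw hu) with h | h
    · exact fun hc => h.not_crosses _ _ (crosses_comm.1 hc)
    · rw [Crosses, hsorted]
      refine hno _ (mem_insert_of_mem (mem_erase.2 ⟨?_, h⟩))
      rw [← sp_eq_of_mem_diag hab]
      exact sp_ne_of_crosses hcross hu w
  refine hp ?_
  rw [← hsorted, sp_eq_of_crosses_of_not_crosses_sides (crosses_comm.1 hcross) hpab hside]
  exact mem_insert_self _ _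

def Triangulation.flip (T : Triangulation m) (hab : (a, b) ∈ T.diag)
    (he : e ∈ (edgeGraph T).commonNeighbors a b) (hf : f ∈ (edgeGraph T).commonNeighbors a b)
    (hcross : Crosses a b e f) : Triangulation m where
  diag := insert (sp e f) (T.diag.erase (a, b))
  mem_lt := forall_mem_insert _ _ _ |>.2
    ⟨(sp_isDiagonal_of_crosses hcross).1, fun p hp => T.mem_lt p (mem_of_mem_erase hp)⟩
  not_boundary := forall_mem_insert _ _ _ |>.2
    ⟨(sp_isDiagonal_of_crosses hcross).2, fun p hp => T.not_boundary p (mem_of_mem_erase hp)⟩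
  noncross := by
    have hnew : ∀ q ∈ T.diag.erase (a, b), ¬ Cross (sp e f) q := fun _ =>
      not_cross_sp_of_mem_erase hab he hf hcross
    intro p hp q hq
    rcases mem_insert.1 hp with rfl | hp <;> rcases mem_insert.1 hq with rfl | hq
    · unfold Cross; omega
    · exact hnew q hq
    · exact fun h => hnew p hp h.symm
    · exact T.noncross p (mem_of_mem_erase hp) q (mem_of_mem_erase hq)
  maximal _ := exists_cross_of_not_mem_flip hab he hf hcross

lemma edgeSet_edgeGraph_flip (hab : (a, b) ∈ T.diag)
    (he : e ∈ (edgeGraph T).commonNeighbors a b) (hf : f ∈ (edgeGraph T).commonNeighbors a b)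
    (hcross : Crosses a b e f) :
    (edgeGraph (T.flip hab he hf hcross)).edgeSet =
      insert s(e, f) ((edgeGraph T).edgeSet \ {s(a, b)}) := by
  ext z
  induction z using Sym2.ind with | _ x y => ?_
  have hside : IsSide x y → s(x, y) ≠ s(a, b) := fun hs h => by
    rw [← sp_eq_sp_iff] at h
    exact hs.not_crosses e f (by rw [Crosses, h]; exact hcross)
  have hne : s(x, y) = s(e, f) → x ≠ y := by
    rintro h rfl
    rcases Sym2.eq_iff.1 h with ⟨rfl, rfl⟩ | ⟨rfl, rfl⟩ <;> exact hcross.right_ne rfl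
  simp only [SimpleGraph.mem_edgeSet, edgeGraph_adj, Set.mem_insert_iff, Set.mem_sdiff,
    Set.mem_singleton_iff, IsEdge, Triangulation.flip, mem_insert, mem_erase, ne_eq,
    ← sp_eq_of_mem_diag hab, sp_eq_sp_iff]
  tauto

lemma commonNeighbors_edgeGraph_flip (hab : (a, b) ∈ T.diag)
    (he : e ∈ (edgeGraph T).commonNeighbors a b) (hf : f ∈ (edgeGraph T).commonNeighbors a b)
    (hcross : Crosses a b e f) :
    (edgeGraph (T.flip hab he hf hcross)).commonNeighbors e f = {a, b} := by
  have hadj : ∀ u w, (u = e ∨ u = f) → (w = a ∨ w = b) →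
      (edgeGraph (T.flip hab he hf hcross)).Adj u w := by
    intro u w hu hw
    rw [← SimpleGraph.mem_edgeSet, edgeSet_edgeGraph_flip]
    refine .inr ⟨?_, fun h => sp_ne_of_crosses hcross hu w (sp_eq_sp_iff.2 h)⟩
    rw [SimpleGraph.mem_edgeSet, SimpleGraph.adj_comm]
    simp only [SimpleGraph.mem_commonNeighbors] at he hf
    rcases hu with rfl | rfl <;> rcases hw with rfl | rfl
    exacts [he.1, he.2, hf.1, hf.2]
  exact commonNeighbors_eq_pair _ hcross.right_ne
    ⟨hadj _ _ (.inl rfl) (.inl rfl), hadj _ _ (.inr rfl) (.inl rfl)⟩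
    ⟨hadj _ _ (.inl rfl) (.inr rfl), hadj _ _ (.inr rfl) (.inr rfl)⟩ hcross.left_ne

theorem quiddity_flip_add (hab : (a, b) ∈ T.diag)
    (he : e ∈ (edgeGraph T).commonNeighbors a b) (hf : f ∈ (edgeGraph T).commonNeighbors a b)
    (hcross : Crosses a b e f) (v : Fin m) :
    quiddity (T.flip hab he hf hcross) v +
        ((if v ∈ ({a, b, e} : Finset (Fin m)) then 1 else 0) +
          (if v ∈ ({a, b, f} : Finset (Fin m)) then 1 else 0)) =
      quiddity T v +
        ((if v ∈ ({e, f, a} : Finset (Fin m)) then 1 else 0) +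
          (if v ∈ ({e, f, b} : Finset (Fin m)) then 1 else 0)) := by
  have hedge : IsEdge T a b := .inr (by rw [sp_eq_of_mem_diag hab]; exact hab)
  have hG := commonNeighbors_eq_pair T hcross.left_ne he hf hcross.right_ne
  rw [quiddity_eq_card, quiddity_eq_card]
  exact SimpleGraph.card_filter_cliqueFinset_three_add_eq_of_edgeSet_eq
    (edgeSet_edgeGraph_flip hab he hf hcross) (edgeGraph_adj.2 ⟨hcross.left_ne, hedge⟩)
    (fun h => hedge.not_crosses (edgeGraph_adj.1 h).2 hcross) hcross.right_ne hG
    (commonNeighbors_edgeGraph_flip hab he hf hcross) v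

end Flip

end Triangulation

/-- Mutation (flip) of an inner diagonal `[a,b]` of a triangulation `T`, where
`(a,c,b)` and `(a,b,d)` are the two triangles of `T` adjacent to `[a,b]` (so
`a, c, b, d` is the quadrilateral of `T` with diagonal `[a,b]`): replacing
`[a,b]` by `[c,d]` yields a triangulation in which the quiddities of `a` and
`b` drop by `1`, the quiddities of `c` and `d` increase by `1`, and all other
quiddities are unchanged; moreover flipping `[c,d]` back returns `T`. -/
theorem flip_diagonal (m : ℕ) (T : Triangulation m) (a b c d : Fin m)
    (hab : (a, b) ∈ T.diag)
    (hc : IsTri T a c b) (hd : IsTri T a b d) (hcd : c ≠ d) :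
    ∃ T' : Triangulation m,
      T'.diag = insert (sp c d) (T.diag.erase (a, b)) ∧
      quiddity T' a + 1 = quiddity T a ∧
      quiddity T' b + 1 = quiddity T b ∧
      quiddity T' c = quiddity T c + 1 ∧
      quiddity T' d = quiddity T d + 1 ∧
      (∀ v : Fin m, v ≠ a → v ≠ b → v ≠ c → v ≠ d →
        quiddity T' v = quiddity T v) ∧
      insert (a, b) (T'.diag.erase (sp c d)) = T.diag := by
  have hlt : (a : ℕ) + 1 < b := T.mem_lt _ hab
  have hm : 1 < m := by have := b.isLt; omega
  have adj : ∀ {u v}, IsEdge T u v → (edgeGraph T).Adj u v := fun h =>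
    edgeGraph_adj.2 ⟨h.ne hm, h⟩
  obtain ⟨hac, hcb, -⟩ := hc
  obtain ⟨-, hbd, had⟩ := hd
  have hac := adj hac
  have hbc := adj (isEdge_comm.1 hcb)
  have had := adj had
  have hbd := adj hbd
  have hab' : a ≠ b := Fin.ne_of_lt (by omega)
  have hcross := crosses_of_mem_commonNeighbors T hab' ⟨hac, hbc⟩ ⟨had, hbd⟩ hcd
  have hq := quiddity_flip_add hab ⟨hac, hbc⟩ ⟨had, hbd⟩ hcross
  refine ⟨T.flip hab ⟨hac, hbc⟩ ⟨had, hbd⟩ hcross, rfl, ?_, ?_, ?_, ?_, ?_, ?_⟩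
  · simpa [hab', hac.ne, had.ne] using hq a
  · simpa [hab'.symm, hbc.ne, hbd.ne] using hq b
  · simpa [hac.ne', hbc.ne', hcd] using hq c
  · simpa [had.ne', hbd.ne', hcd.symm] using hq d
  · intro v hva hvb hvc hvd
    simpa [hva, hvb, hvc, hvd] using hq v
  · have hnew : sp c d ∉ T.diag.erase (a, b) := fun h =>
      T.noncross _ hab _ (mem_of_mem_erase h) (by rw [← sp_eq_of_mem_diag hab]; exact hcross)
    exact (congrArg (insert (a, b)) (erase_insert hnew)).trans (insert_erase hab)
end

section
/- Let F be a Conway–Coxeter frieze with entries p_{i,j} (Plücker labeling, 1 ≤ i < j ≤ m, with p_{i,i}=0, p_{i,i+1}=1) coming from a triangulation T of an m-gon, and suppose the diagonal [i,j] belongs to T (so p_{i,j} = 1) with 1 ≤ i < j ≤ m−1 and j − i ≥ 2. Then the sequence (a_1, ..., a_{i−1}, p_{i−1,j}, p_{i,j+1}, a_{j+1}, ..., a_m), where (a_1, ..., a_m) is the quiddity of F, is the quiddity sequence of a Conway–Coxeter frieze of width m + i − j − 2. -/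
/-- A (tame) frieze pattern of width `w`: entries `m i j` for `i ≤ j ≤ i + w + 3`,
with the usual boundary conditions and the unimodular diamond rule. In the
Plücker labeling `p_{i,j}` of the paper, `p i j = m i j` for `i < j ≤ i + w + 3`,
the quiddity is `a k = m (k−1) (k+1)`. -/
structure Frieze (w : ℕ) where
  m : ℤ → ℤ → ℤ
  diag_zero : ∀ i : ℤ, m i i = 0
  diag_one : ∀ i : ℤ, m i (i + 1) = 1
  top_one : ∀ i : ℤ, m i (i + (w : ℤ) + 2) = 1
  top_zero : ∀ i : ℤ, m i (i + (w : ℤ) + 3) = 0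
  rule : ∀ i j : ℤ, i + 1 ≤ j → j ≤ i + (w : ℤ) + 2 →
    m i j * m (i + 1) (j + 1) - m (i + 1) j * m i (j + 1) = 1

/-!
Write `n = w + 3`. Since the entries of a positive frieze are nonzero, the diamond rule can be
divided out to give the quiddity recurrence `m a (b + 2) = m b (b + 2) * m a (b + 1) - m a b`
along each row. Two solutions of this recurrence have a constant Wronskian, which yields the
Ptolemy relation `m A C * m B D - m B C * m A D = m A B * m C D` for `A ≤ B ≤ C ≤ D ≤ A + n`,
and from it glide symmetry and `n`-periodicity. By the Ptolemy relation, pulling a frieze back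
along a strictly increasing `φ` with `φ (x + n') = φ x + n` whose consecutive values are joined
by entries `1` gives a frieze of width `n' - 3`. Cutting along a diagonal `[i, j]` with
`m i j = 1` is the pullback along the map that skips the vertices strictly between `i` and `j`
in every period.
-/

theorem eq_zero_of_recurrence {h q : ℤ → ℤ} {c e : ℤ} (h₀ : h c = 0)
    (h₁ : c + 1 ≤ e → h (c + 1) = 0)
    (hrec : ∀ n, c ≤ n → n + 2 ≤ e → h (n + 2) = q n * h (n + 1) - h n)
    {n : ℤ} (hcn : c ≤ n) (hne : n ≤ e) : h n = 0 := by
  have hpair : ∀ n, c ≤ n → n + 1 ≤ e → h n = 0 ∧ h (n + 1) = 0 := by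
    intro n hcn
    induction n, hcn using Int.leInduction with
    | base => exact fun he => ⟨h₀, h₁ he⟩
    | succ n hcn ih =>
      intro he
      obtain ⟨ih₀, ih₁⟩ := ih (by omega)
      refine ⟨ih₁, ?_⟩
      rw [show n + 1 + 1 = n + 2 by ring, hrec n hcn (by omega), ih₀, ih₁]
      ring
  obtain hne | rfl := hne.lt_or_eq
  · exact (hpair n hcn hne).1
  obtain hcn | rfl := hcn.lt_or_eq
  · simpa using (hpair (n - 1) (by omega) (by omega)).2
  · exact h₀

theorem Int.sub_le_sub_of_strictMono {φ : ℤ → ℤ} (hφ : StrictMono φ) {a b : ℤ} (hab : a ≤ b) :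
    b - a ≤ φ b - φ a := by
  induction b, hab using Int.leInduction with
  | base => simp
  | succ b hab ih => have := hφ (lt_add_one b); omega

/-- The increasing bijection from `ℤ` onto `ℤ ∖ ({I + 1, …, I + d} + (P + d) ℤ)` that is the
identity on `(I - P, I]`. -/
def skip (I d P x : ℤ) : ℤ := x - d * ((I - x) / P)

theorem skip_add_period {I d P : ℤ} (hP : P ≠ 0) (x : ℤ) :
    skip I d P (x + P) = skip I d P x + (P + d) := by
  unfold skip
  rw [show I - (x + P) = I - x + -1 * P by ring, Int.add_mul_ediv_right _ _ hP]
  ring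

theorem skip_eq {I d P x : ℤ} (t : ℤ) (h₁ : I + t * P < x) (h₂ : x ≤ I + (t + 1) * P) :
    skip I d P x = x + (t + 1) * d := by
  have hP : P ≠ 0 := by rintro rfl; linarith
  unfold skip
  rw [show I - x = I + (t + 1) * P - x + -(t + 1) * P by ring, Int.add_mul_ediv_right _ _ hP,
    Int.ediv_eq_zero_of_lt (by linarith) (by linarith)]
  ring

theorem skip_eq_ite {I d P x : ℤ} (h₁ : I - P < x) (h₂ : x ≤ I + P) :
    skip I d P x = if x ≤ I then x else x + d := by
  split_ifs with h
  · simpa using skip_eq (d := d) (-1) (by linarith) (by linarith)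
  · simpa using skip_eq (d := d) 0 (by linarith) (by linarith)

theorem skip_add_one {I d P : ℤ} (hP : 0 < P) (x : ℤ) :
    skip I d P (x + 1) = skip I d P x + 1 ∨
      ∃ t : ℤ, skip I d P x = I + t * (P + d) ∧ skip I d P (x + 1) = I + t * (P + d) + d + 1 := by
  set t := (x - I) / P
  have h₁ : I + t * P ≤ x := by linarith [Int.ediv_mul_le (x - I) hP.ne']
  have h₂ : x < I + (t + 1) * P := by linarith [Int.lt_ediv_add_one_mul_self (x - I) hP]
  obtain h₁ | h₁ := h₁.lt_or_eq
  · left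
    rw [skip_eq t h₁ h₂.le, skip_eq t (by linarith) (by linarith)]
    ring
  · right
    refine ⟨t, ?_, ?_⟩
    · rw [skip_eq (t - 1) (by linarith) (by linarith), ← h₁]; ring
    · rw [skip_eq t (by linarith) (by linarith), ← h₁]; ring

theorem skip_strictMono {I d P : ℤ} (hP : 0 < P) (hd : 0 ≤ d) : StrictMono (skip I d P) :=
  strictMono_int_of_lt_succ fun x => by
    obtain h | ⟨t, h₁, h₂⟩ := skip_add_one (I := I) (d := d) hP x <;> omega

namespace Frieze

variable {w : ℕ}

def IsPositive (F : Frieze w) : Prop :=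
  ∀ a b : ℤ, a + 2 ≤ b → b ≤ a + w + 1 → 0 < F.m a b

variable {F : Frieze w}

namespace IsPositive

theorem pos (hF : F.IsPositive) {a b : ℤ} (hab : a < b) (hb : b < a + w + 3) : 0 < F.m a b := by
  obtain rfl | rfl | ⟨h₁, h₂⟩ : b = a + 1 ∨ b = a + w + 2 ∨ (a + 2 ≤ b ∧ b ≤ a + w + 1) := by
    omega
  · simp [F.diag_one]
  · simp [F.top_one]
  · exact hF a b h₁ h₂

theorem m_add_two (hF : F.IsPositive) {a b : ℤ} (hab : a ≤ b) (hb : b ≤ a + w + 1) :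
    F.m a (b + 2) = F.m b (b + 2) * F.m a (b + 1) - F.m a b := by
  induction a, hab using Int.leInductionDown with
  | base => rw [F.diag_zero, F.diag_one]; ring
  | pred a hab ih =>
    have ih := ih (by omega)
    have h₁ := F.rule (a - 1) b (by omega) (by omega)
    have h₂ := F.rule (a - 1) (b + 1) (by omega) (by omega)
    rw [sub_add_cancel] at h₁ h₂
    rw [show b + 1 + 1 = b + 2 by ring] at h₂
    have hne : F.m a (b + 1) ≠ 0 := (hF.pos (by omega) (by omega)).ne'
    apply mul_left_cancel₀ hne
    linear_combination h₁ - h₂ + F.m (a - 1) (b + 1) * ih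

theorem ptolemy_succ (hF : F.IsPositive) {A B C : ℤ} (hAB : A ≤ B) (hBC : B ≤ C)
    (hC : C + 1 ≤ A + w + 3) :
    F.m A C * F.m B (C + 1) - F.m B C * F.m A (C + 1) = F.m A B := by
  induction C, hBC using Int.leInduction with
  | base => rw [F.diag_one, F.diag_zero]; ring
  | succ C hBC ih =>
    rw [show C + 1 + 1 = C + 2 by ring, hF.m_add_two (hAB.trans hBC) (by omega),
      hF.m_add_two hBC (by omega)]
    linear_combination ih (by omega)

theorem ptolemy (hF : F.IsPositive) {A B C D : ℤ} (hAB : A ≤ B) (hBC : B ≤ C) (hCD : C ≤ D)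
    (hD : D ≤ A + w + 3) :
    F.m A C * F.m B D - F.m B C * F.m A D = F.m A B * F.m C D := by
  have key := eq_zero_of_recurrence
    (h := fun D => F.m A C * F.m B D - F.m B C * F.m A D - F.m A B * F.m C D)
    (q := fun n => F.m n (n + 2)) (c := C) (e := A + w + 3) ?_ ?_ ?_ hCD hD
  · linear_combination key
  · simp only [F.diag_zero]; ring
  · intro hC
    simp only [hF.ptolemy_succ hAB hBC hC, F.diag_one]; ring
  · intro n hn he
    simp only [hF.m_add_two (hAB.trans (hBC.trans hn)) (by omega),
      hF.m_add_two (hBC.trans hn) (by omega), hF.m_add_two hn (by omega)]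
    ring

theorem glide (hF : F.IsPositive) {a b : ℤ} (hab : a ≤ b) (hb : b ≤ a + w + 3) :
    F.m a b = F.m b (a + w + 3) := by
  obtain rfl | hb := hb.eq_or_lt
  · rw [F.top_zero, F.diag_zero]
  · have h := hF.ptolemy_succ hab (C := a + w + 2) (by omega) (by omega)
    rw [F.top_one, show a + w + 2 + 1 = a + w + 3 by ring, F.top_zero] at h
    linear_combination -h

theorem periodic (hF : F.IsPositive) {a b : ℤ} (hab : a ≤ b) (hb : b ≤ a + w + 3) :
    Function.Periodic (fun x => F.m (a + x) (b + x)) (w + 3) := by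
  intro x
  change F.m (a + (x + (w + 3))) (b + (x + (w + 3))) = F.m (a + x) (b + x)
  rw [hF.glide (a := a + x) (b := b + x) (by omega) (by omega),
    hF.glide (a := b + x) (by omega) (by omega)]
  ring_nf

theorem m_skip_skip_add_one (hF : F.IsPositive) {I J P : ℤ} (hIJ : I ≤ J) (hP : 0 < P)
    (hPJ : P + (J - I - 1) = w + 3) (hdiag : F.m I J = 1) (x : ℤ) :
    F.m (skip I (J - I - 1) P x) (skip I (J - I - 1) P (x + 1)) = 1 := by
  obtain h | ⟨t, h₁, h₂⟩ := skip_add_one (I := I) (d := J - I - 1) hP x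
  · rw [h, F.diag_one]
  · have hper := (hF.periodic hIJ (by omega)).int_mul_eq t
    simp only [Int.cast_id, add_zero] at hper
    rw [h₁, h₂, hPJ, show I + t * (w + 3) + (J - I - 1) + 1 = J + t * (w + 3) by ring,
      hper, hdiag]

end IsPositive

def comap (F : Frieze w) (hF : F.IsPositive) (w' : ℕ) (φ : ℤ → ℤ) (hφ : StrictMono φ)
    (hper : ∀ x, φ (x + (w' + 3)) = φ x + (w + 3)) (hedge : ∀ x, F.m (φ x) (φ (x + 1)) = 1) :
    Frieze w' where
  m a b := F.m (φ a) (φ b)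
  diag_zero _ := F.diag_zero _
  diag_one := hedge
  top_one a := by
    have hφa : φ a ≤ φ (a - 1) + (w + 3) := by rw [← hper]; exact hφ.monotone (by omega)
    rw [show a + w' + 2 = a - 1 + (w' + 3) by ring, hper, ← add_assoc,
      ← hF.glide (hφ.monotone (by omega)) (by omega)]
    simpa using hedge (a - 1)
  top_zero a := by
    rw [show a + w' + 3 = a + (w' + 3) by ring, hper, ← add_assoc]
    exact F.top_zero _
  rule a b hab hb := by
    have hD : φ (b + 1) ≤ φ a + (w + 3) := by rw [← hper]; exact hφ.monotone (by omega)
    rw [hF.ptolemy (hφ.monotone (by omega)) (hφ.monotone hab) (hφ.monotone (by omega))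
      (by omega), hedge, hedge, one_mul]

theorem IsPositive.comap (hF : F.IsPositive) {w' : ℕ} {φ : ℤ → ℤ} (hφ : StrictMono φ)
    (hper : ∀ x, φ (x + (w' + 3)) = φ x + (w + 3)) (hedge : ∀ x, F.m (φ x) (φ (x + 1)) = 1) :
    (F.comap hF w' φ hφ hper hedge).IsPositive := by
  intro a b hab hb
  have h₁ := Int.sub_le_sub_of_strictMono hφ (show a ≤ b by omega)
  have h₂ := Int.sub_le_sub_of_strictMono hφ (show b ≤ a + (w' + 3) by omega)
  rw [hper] at h₂
  exact hF _ _ (by omega) (by omega)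

def reduce (F : Frieze w) (hF : F.IsPositive) (w' : ℕ) {I J : ℤ} (hIJ : I < J)
    (hw : (w' : ℤ) + (J - I - 1) = w) (hdiag : F.m I J = 1) : Frieze w' :=
  F.comap hF w' (skip I (J - I - 1) (w' + 3)) (skip_strictMono (by omega) (by omega))
    (fun x => by rw [skip_add_period (by omega)]; omega)
    (hF.m_skip_skip_add_one hIJ.le (by omega) (by omega) hdiag)

theorem IsPositive.reduce (hF : F.IsPositive) {w' : ℕ} {I J : ℤ} (hIJ : I < J)
    (hw : (w' : ℤ) + (J - I - 1) = w) (hdiag : F.m I J = 1) :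
    (F.reduce hF w' hIJ hw hdiag).IsPositive :=
  hF.comap _ _ _

end Frieze

theorem frieze_reduction_general (m i j : ℕ)
    (hi : 1 ≤ i) (hij : i + 2 ≤ j) (hjm : j ≤ m - 1)
    (F : Frieze (m - 3))
    (hpos : ∀ a b : ℤ, a + 2 ≤ b → b ≤ a + ((m - 3 : ℕ) : ℤ) + 1 → 0 < F.m a b)
    (hdiag : F.m (i : ℤ) (j : ℤ) = 1) :
    ∃ F' : Frieze (m + i - j - 2),
      (∀ a b : ℤ, a + 2 ≤ b → b ≤ a + ((m + i - j - 2 : ℕ) : ℤ) + 1 →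
        0 < F'.m a b) ∧
      ∀ k : ℕ, 1 ≤ k → k ≤ m + i - j + 1 →
        F'.m ((k : ℤ) - 1) ((k : ℤ) + 1) =
          if k ≤ i - 1 then F.m ((k : ℤ) - 1) ((k : ℤ) + 1)
          else if k = i then F.m ((i : ℤ) - 1) (j : ℤ)
          else if k = i + 1 then F.m (i : ℤ) ((j : ℤ) + 1)
          else F.m ((k : ℤ) + (j : ℤ) - (i : ℤ) - 2) ((k : ℤ) + (j : ℤ) - (i : ℤ)) := by
  have hij' : (i : ℤ) < j := by omega
  have hw : ((m + i - j - 2 : ℕ) : ℤ) + ((j : ℤ) - i - 1) = (m - 3 : ℕ) := by omega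
  refine ⟨F.reduce hpos _ hij' hw hdiag, Frieze.IsPositive.reduce hpos hij' hw hdiag,
    fun k hk₁ hk₂ => ?_⟩
  change F.m (skip _ _ _ (k - 1)) (skip _ _ _ (k + 1)) = _
  rw [skip_eq_ite (by omega) (by omega), skip_eq_ite (by omega) (by omega)]
  split_ifs <;> first | omega | (congr 1 <;> omega)

/-- Reduction of a Conway–Coxeter frieze at a diagonal of its triangulation:
let `F` be a CC-frieze of width `m − 3` (all entries in the nontrivial rows
positive) with quiddity `a k = p (k−1) (k+1)`, and suppose the diagonal `[i,j]`
belongs to the triangulation, i.e. `p i j = 1`, where `1 ≤ i`, `i + 2 ≤ j`,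
`j ≤ m − 1`. Then `(a_1, …, a_{i−1}, p_{i−1,j}, p_{i,j+1}, a_{j+1}, …, a_m)` is
the quiddity sequence of a Conway–Coxeter frieze of width `m + i − j − 2`. -/
theorem frieze_reduction (m i j : ℕ) (hm : 3 ≤ m)
    (hi : 1 ≤ i) (hij : i + 2 ≤ j) (hjm : j ≤ m - 1)
    (F : Frieze (m - 3))
    (hpos : ∀ a b : ℤ, a + 2 ≤ b → b ≤ a + ((m - 3 : ℕ) : ℤ) + 1 → 0 < F.m a b)
    (hdiag : F.m (i : ℤ) (j : ℤ) = 1) :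
    ∃ F' : Frieze (m + i - j - 2),
      (∀ a b : ℤ, a + 2 ≤ b → b ≤ a + ((m + i - j - 2 : ℕ) : ℤ) + 1 →
        0 < F'.m a b) ∧
      ∀ k : ℕ, 1 ≤ k → k ≤ m + i - j + 1 →
        F'.m ((k : ℤ) - 1) ((k : ℤ) + 1) =
          if k ≤ i - 1 then F.m ((k : ℤ) - 1) ((k : ℤ) + 1)
          else if k = i then F.m ((i : ℤ) - 1) (j : ℤ)
          else if k = i + 1 then F.m (i : ℤ) ((j : ℤ) + 1)
          else F.m ((k : ℤ) + (j : ℤ) - (i : ℤ) - 2) ((k : ℤ) + (j : ℤ) - (i : ℤ)) :=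
  frieze_reduction_general m i j hi hij hjm F hpos hdiag
end
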